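/- Let τ ∈ ℂ with Re τ > 0 and a ∈ ℂ. Then the integrals g₊(w) = i ∫_{−∞}^{0} e^{−t²τ/4} e^{it(a+w)} dt and g₋(w) = −i ∫_{0}^{∞} e^{−t²τ/4} e^{it(a+w)} dt converge absolutely for every w ∈ ℂ, define entire functions of w, and each is a *_τ-inverse of a + w: (a+w) g₊(w) + (τ/2) g₊'(w) = 1 and (a+w) g₋(w) + (τ/2) g₋'(w) = 1 for all w ∈ ℂ. -/

import Mathlib

/-!
Write `φ_z(t) = e^{-t²τ/4} e^{itz}`, so that `g₊(w) = i ∫_{t<0} φ_{a+w}` and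
`g₋(w) = -i ∫_{t>0} φ_{a+w}`. Completing the square bounds `|t φ_z(t)|` by a constant multiple of
`|t| e^{-Re τ t²/8}`, locally uniformly in `z`, which gives integrability and lets us differentiate
under the integral sign. The point is the identity `∂ₜφ_z = i (z φ_z + (τ/2) ∂_z φ_z)`: it turns
`(a+w) *_τ g₊` into `∫_{t<0} ∂ₜφ = φ(0) = 1`, and `(a+w) *_τ g₋` into `-∫_{t>0} ∂ₜφ = φ(0) = 1`.
-/

open Complex MeasureTheory

/-- `g₊(w) = i ∫_{−∞}^{0} e^{−t²τ/4} e^{it(a+w)} dt`, the `τ`-expression of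
`(a+w)_{*+}^{−1}`. -/
noncomputable def invPlus (τ a : ℂ) : ℂ → ℂ := fun w =>
  Complex.I * ∫ t in Set.Iio (0 : ℝ),
    Complex.exp (-(t : ℂ) ^ 2 * τ / 4) * Complex.exp (Complex.I * (t : ℂ) * (a + w))

/-- `g₋(w) = −i ∫_{0}^{∞} e^{−t²τ/4} e^{it(a+w)} dt`, the `τ`-expression of
`(a+w)_{*−}^{−1}`. -/
noncomputable def invMinus (τ a : ℂ) : ℂ → ℂ := fun w =>
  -Complex.I * ∫ t in Set.Ioi (0 : ℝ),
    Complex.exp (-(t : ℂ) ^ 2 * τ / 4) * Complex.exp (Complex.I * (t : ℂ) * (a + w))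

noncomputable def gaussWave (τ z : ℂ) (t : ℝ) : ℂ :=
  cexp (-(t : ℂ) ^ 2 * τ / 4) * cexp (I * t * z)

lemma norm_gaussWave (τ z : ℂ) (t : ℝ) :
    ‖gaussWave τ z t‖ = Real.exp (-(τ.re / 4) * t ^ 2 - z.im * t) := by
  rw [gaussWave, norm_mul, Complex.norm_exp, Complex.norm_exp, ← Real.exp_add]
  congr 1
  simp only [pow_two, neg_mul, div_ofNat_re, neg_re, mul_re, ofReal_re, ofReal_im, mul_zero,
    sub_zero, mul_im, zero_mul, add_zero, I_re, I_im, sub_self, one_mul, zero_add, zero_sub]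
  ring

lemma norm_gaussWave_le {τ z : ℂ} (hτ : 0 < τ.re) {M : ℝ} (hM : |z.im| ≤ M) (t : ℝ) :
    ‖gaussWave τ z t‖ ≤ Real.exp (2 * M ^ 2 / τ.re) * Real.exp (-(τ.re / 8) * t ^ 2) := by
  rw [norm_gaussWave, ← Real.exp_add]
  gcongr
  have hsq : 2 * z.im ^ 2 / τ.re + τ.re / 8 * t ^ 2 + z.im * t
      = τ.re / 8 * (t + 4 * z.im / τ.re) ^ 2 := by
    field_simp
    ring
  have hzM : 2 * z.im ^ 2 / τ.re ≤ 2 * M ^ 2 / τ.re := by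
    have := sq_le_sq' (abs_le.1 hM).1 (abs_le.1 hM).2
    exact div_le_div_of_nonneg_right (by linarith) hτ.le
  linarith [mul_nonneg (by linarith : 0 ≤ τ.re / 8) (sq_nonneg (t + 4 * z.im / τ.re))]

lemma continuous_gaussWave (τ z : ℂ) : Continuous (gaussWave τ z) := by
  unfold gaussWave
  fun_prop

lemma integrable_gaussWave {τ : ℂ} (hτ : 0 < τ.re) (z : ℂ) : Integrable (gaussWave τ z) :=
  ((integrable_exp_neg_mul_sq (by positivity : 0 < τ.re / 8)).const_mul _).mono'
    (continuous_gaussWave τ z).aestronglyMeasurable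
    (.of_forall (norm_gaussWave_le hτ le_rfl))

lemma norm_mul_gaussWave_le {τ z : ℂ} (hτ : 0 < τ.re) {M : ℝ} (hM : |z.im| ≤ M) (t : ℝ) :
    ‖I * t * gaussWave τ z t‖
      ≤ Real.exp (2 * M ^ 2 / τ.re) * ‖t * Real.exp (-(τ.re / 8) * t ^ 2)‖ := by
  rw [norm_mul, norm_mul, norm_I, one_mul, norm_real, norm_mul,
    Real.norm_of_nonneg (Real.exp_pos _).le, mul_left_comm]
  exact mul_le_mul_of_nonneg_left (norm_gaussWave_le hτ hM t) (norm_nonneg _)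

lemma integrable_mul_gaussWave {τ : ℂ} (hτ : 0 < τ.re) (z : ℂ) :
    Integrable fun t : ℝ => I * t * gaussWave τ z t :=
  ((integrable_mul_exp_neg_mul_sq (by positivity : 0 < τ.re / 8)).norm.const_mul _).mono'
    (by have := continuous_gaussWave τ z; fun_prop)
    (.of_forall (norm_mul_gaussWave_le hτ le_rfl))

lemma hasDerivAt_gaussWave_freq (τ z : ℂ) (t : ℝ) :
    HasDerivAt (gaussWave τ · t) (I * t * gaussWave τ z t) z := by
  have := ((hasDerivAt_id z).const_mul (I * t)).cexp.const_mul (cexp (-(t : ℂ) ^ 2 * τ / 4))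
  refine this.congr_deriv ?_
  simp only [gaussWave, id]
  ring

lemma hasDerivAt_gaussWave (τ z : ℂ) (t : ℝ) :
    HasDerivAt (gaussWave τ z) ((-(t : ℂ) * τ / 2 + I * z) * gaussWave τ z t) t := by
  have h : HasDerivAt (fun u : ℂ => cexp (-u ^ 2 * τ / 4) * cexp (I * u * z))
      ((-(t : ℂ) * τ / 2 + I * z) * gaussWave τ z t) t := by
    have := (((hasDerivAt_pow 2 (t : ℂ)).neg.mul_const τ).div_const 4).cexp.mul
      (((hasDerivAt_id (t : ℂ)).const_mul I).mul_const z).cexp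
    refine this.congr_deriv ?_
    simp only [gaussWave, id, Pi.neg_apply]
    ring
  exact h.comp_ofReal

lemma hasDerivAt_setIntegral_gaussWave {τ : ℂ} (hτ : 0 < τ.re) (s : Set ℝ) (z₀ : ℂ) :
    HasDerivAt (fun z => ∫ t in s, gaussWave τ z t) (∫ t in s, I * t * gaussWave τ z₀ t) z₀ := by
  have hM : ∀ z ∈ Metric.ball z₀ 1, |z.im| ≤ |z₀.im| + 1 := fun z hz => by
    have h1 : |(z - z₀).im| ≤ ‖z - z₀‖ := abs_im_le_norm _
    have h2 : |z.im| ≤ |z₀.im| + |(z - z₀).im| := by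
      simpa using abs_add_le z₀.im (z - z₀).im
    linarith [mem_ball_iff_norm.1 hz]
  refine (hasDerivAt_integral_of_dominated_loc_of_deriv_le (Metric.ball_mem_nhds z₀ one_pos)
    (.of_forall fun z => (continuous_gaussWave τ z).aestronglyMeasurable)
    (integrable_gaussWave hτ z₀).integrableOn
    (integrable_mul_gaussWave hτ z₀).aestronglyMeasurable.restrict
    (.of_forall fun t z hz => norm_mul_gaussWave_le hτ (hM z hz) t)
    ((integrable_mul_exp_neg_mul_sq (by positivity : 0 < τ.re / 8)).norm.const_mul _).integrableOn
    (.of_forall fun t z _ => hasDerivAt_gaussWave_freq τ z t)).2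

lemma deriv_gaussWave_eq (τ z : ℂ) (t : ℝ) :
    (-(t : ℂ) * τ / 2 + I * z) * gaussWave τ z t
      = I * (z * gaussWave τ z t + τ / 2 * (I * t * gaussWave τ z t)) := by
  linear_combination -(τ * t * gaussWave τ z t / 2) * I_sq

lemma setIntegral_deriv_gaussWave {τ : ℂ} (hτ : 0 < τ.re) (s : Set ℝ) (z : ℂ) :
    ∫ t in s, (-(t : ℂ) * τ / 2 + I * z) * gaussWave τ z t
      = I * (z * (∫ t in s, gaussWave τ z t) + τ / 2 * ∫ t in s, I * t * gaussWave τ z t) := by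
  simp_rw [deriv_gaussWave_eq]
  rw [integral_const_mul, integral_add, integral_const_mul, integral_const_mul]
  · exact ((integrable_gaussWave hτ z).const_mul z).integrableOn
  · exact ((integrable_mul_gaussWave hτ z).const_mul (τ / 2)).integrableOn

lemma integrable_deriv_gaussWave {τ : ℂ} (hτ : 0 < τ.re) (z : ℂ) :
    Integrable fun t : ℝ => (-(t : ℂ) * τ / 2 + I * z) * gaussWave τ z t := by
  simp_rw [deriv_gaussWave_eq]
  exact (((integrable_gaussWave hτ z).const_mul z).add
    ((integrable_mul_gaussWave hτ z).const_mul (τ / 2))).const_mul I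

lemma integral_Iio_deriv_gaussWave {τ : ℂ} (hτ : 0 < τ.re) (z : ℂ) :
    ∫ t in Set.Iio (0 : ℝ), (-(t : ℂ) * τ / 2 + I * z) * gaussWave τ z t = 1 := by
  have hderiv := fun t (_ : t ∈ Set.Iic (0 : ℝ)) => hasDerivAt_gaussWave τ z t
  have hint := (integrable_deriv_gaussWave hτ z).integrableOn (s := Set.Iic 0)
  rw [← integral_Iic_eq_integral_Iio, integral_Iic_of_hasDerivAt_of_tendsto' hderiv hint
    (tendsto_zero_of_hasDerivAt_of_integrableOn_Iic hderiv hint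
      (integrable_gaussWave hτ z).integrableOn)]
  simp [gaussWave]

lemma integral_Ioi_deriv_gaussWave {τ : ℂ} (hτ : 0 < τ.re) (z : ℂ) :
    ∫ t in Set.Ioi (0 : ℝ), (-(t : ℂ) * τ / 2 + I * z) * gaussWave τ z t = -1 := by
  have hderiv := fun t (_ : t ∈ Set.Ici (0 : ℝ)) => hasDerivAt_gaussWave τ z t
  have hint := (integrable_deriv_gaussWave hτ z).integrableOn (s := Set.Ioi 0)
  rw [integral_Ioi_of_hasDerivAt_of_tendsto' hderiv hint
    (tendsto_zero_of_hasDerivAt_of_integrableOn_Ioi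
      (fun t ht => hderiv t (Set.Ioi_subset_Ici_self ht)) hint
      (integrable_gaussWave hτ z).integrableOn)]
  simp [gaussWave]

/-- `(a + w) *_τ g`, evaluated at `w`. -/
noncomputable def tauProd (τ a : ℂ) (g : ℂ → ℂ) (w : ℂ) : ℂ :=
  (a + w) * g w + τ / 2 * deriv g w

lemma hasDerivAt_invPlus {τ : ℂ} (hτ : 0 < τ.re) (a w : ℂ) :
    HasDerivAt (invPlus τ a) (I * ∫ t in Set.Iio (0 : ℝ), I * t * gaussWave τ (a + w) t) w :=
  ((hasDerivAt_setIntegral_gaussWave hτ _ (a + w)).comp_const_add a w).const_mul I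

lemma hasDerivAt_invMinus {τ : ℂ} (hτ : 0 < τ.re) (a w : ℂ) :
    HasDerivAt (invMinus τ a) (-I * ∫ t in Set.Ioi (0 : ℝ), I * t * gaussWave τ (a + w) t) w :=
  ((hasDerivAt_setIntegral_gaussWave hτ _ (a + w)).comp_const_add a w).const_mul (-I)

lemma tauProd_invPlus {τ : ℂ} (hτ : 0 < τ.re) (a w : ℂ) : tauProd τ a (invPlus τ a) w = 1 := by
  change (a + w) * (I * ∫ t in Set.Iio (0 : ℝ), gaussWave τ (a + w) t) + _ = 1
  rw [(hasDerivAt_invPlus hτ a w).deriv]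
  linear_combination (setIntegral_deriv_gaussWave hτ _ (a + w)).symm.trans
    (integral_Iio_deriv_gaussWave hτ (a + w))

lemma tauProd_invMinus {τ : ℂ} (hτ : 0 < τ.re) (a w : ℂ) : tauProd τ a (invMinus τ a) w = 1 := by
  change (a + w) * (-I * ∫ t in Set.Ioi (0 : ℝ), gaussWave τ (a + w) t) + _ = 1
  rw [(hasDerivAt_invMinus hτ a w).deriv]
  linear_combination -(setIntegral_deriv_gaussWave hτ _ (a + w)).symm.trans
    (integral_Ioi_deriv_gaussWave hτ (a + w))

/-- For `Re τ > 0` and `a ∈ ℂ`, the integrals defining `g₊`, `g₋` converge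
absolutely, define entire functions of `w`, and each is a `*_τ`-inverse of `a + w`:
`(a+w)·g(w) + (τ/2)·g′(w) = 1`. -/
theorem invPlus_invMinus_inverses (τ : ℂ) (hτ : 0 < τ.re) (a : ℂ) :
    (∀ w : ℂ, IntegrableOn (fun t : ℝ =>
      Complex.exp (-(t : ℂ) ^ 2 * τ / 4) * Complex.exp (Complex.I * (t : ℂ) * (a + w)))
      (Set.Iio (0 : ℝ))) ∧
    (∀ w : ℂ, IntegrableOn (fun t : ℝ =>
      Complex.exp (-(t : ℂ) ^ 2 * τ / 4) * Complex.exp (Complex.I * (t : ℂ) * (a + w)))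
      (Set.Ioi (0 : ℝ))) ∧
    Differentiable ℂ (invPlus τ a) ∧
    Differentiable ℂ (invMinus τ a) ∧
    (∀ w : ℂ, (a + w) * invPlus τ a w + τ / 2 * deriv (invPlus τ a) w = 1) ∧
    (∀ w : ℂ, (a + w) * invMinus τ a w + τ / 2 * deriv (invMinus τ a) w = 1) :=
  ⟨fun w => (integrable_gaussWave hτ (a + w)).integrableOn,
    fun w => (integrable_gaussWave hτ (a + w)).integrableOn,
    fun w => (hasDerivAt_invPlus hτ a w).differentiableAt,
    fun w => (hasDerivAt_invMinus hτ a w).differentiableAt,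
    tauProd_invPlus hτ a, tauProd_invMinus hτ a⟩
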